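/- Let V ⊆ ℂⁿ be a finite set with vanishing ideal I, let r₁, …, r_n ∈ ℂ[x₁,…,x_n]/I, and let B be the subalgebra generated by r₁, …, r_n. Then B is isomorphic as a ℂ-algebra to ℂ[y₁,…,y_n]/J, where J is the vanishing ideal of the image of V under the map (r₁,…,r_n) : V → ℂⁿ. In particular, dim_ℂ B equals the cardinality of the image of V under (r₁,…,r_n). -/
import Mathlib


set_option synthInstance.maxHeartbeats 800000

open MvPolynomial

private lemma aeval_eq_eval' {n : ℕ} (x : Fin n → ℂ) (p : MvPolynomial (Fin n) ℂ) :
    (MvPolynomial.aeval x : MvPolynomial (Fin n) ℂ →ₐ[ℂ] ℂ) p = eval x p := by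
  rw [← coe_aeval_eq_eval]; rfl

private lemma exists_sep {n : ℕ} (β γ : Fin n → ℂ) (h : β ≠ γ) :
    ∃ q : MvPolynomial (Fin n) ℂ, eval β q = 1 ∧ eval γ q = 0 := by
  obtain ⟨j, hj⟩ := Function.ne_iff.mp h
  refine ⟨C (β j - γ j)⁻¹ * (X j - C (γ j)), ?_, ?_⟩
  · simp [inv_mul_cancel₀ (sub_ne_zero.mpr hj)]
  · simp

/-- A separating polynomial: `1` at `β` and `0` at `γ` when `β ≠ γ`, and `1` if `β = γ`. -/
private noncomputable def sep {n : ℕ} (β γ : Fin n → ℂ) : MvPolynomial (Fin n) ℂ :=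
  if h : β = γ then 1 else (exists_sep β γ h).choose

private lemma sep_self {n : ℕ} (β : Fin n → ℂ) : sep β β = 1 := by simp [sep]

private lemma eval_sep_left {n : ℕ} (β γ : Fin n → ℂ) : eval β (sep β γ) = 1 := by
  by_cases h : β = γ
  · simp [h, sep_self]
  · rw [sep, dif_neg h]; exact (exists_sep β γ h).choose_spec.1

private lemma eval_sep_right {n : ℕ} (β γ : Fin n → ℂ) (h : β ≠ γ) :
    eval γ (sep β γ) = 0 := by
  rw [sep, dif_neg h]; exact (exists_sep β γ h).choose_spec.2

/-- Characterization of subalgebras of `ℂ[x]/I` generated by `n` elements `r₁,…,rₙ`: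
the subalgebra is isomorphic to `ℂ[y₁,…,yₙ]/J` where `J` is the vanishing ideal of the image
of the variety `V` under `(r₁,…,rₙ)`, and its dimension is the cardinality of that image. -/
theorem subalgebra_generated_by_polynomials (n k : ℕ) (α : Fin k → (Fin n → ℂ))
    (hα : Function.Injective α)
    (I : Ideal (MvPolynomial (Fin n) ℂ))
    (hI : ∀ p : MvPolynomial (Fin n) ℂ, p ∈ I ↔ ∀ i, eval (α i) p = 0)
    (r : Fin n → MvPolynomial (Fin n) ℂ)
    (B : Subalgebra ℂ (MvPolynomial (Fin n) ℂ ⧸ I))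
    (hB : B = Algebra.adjoin ℂ (Set.range fun j => Ideal.Quotient.mk I (r j)))
    (S : Set (Fin n → ℂ))
    (hS : S = Set.range fun i : Fin k => fun j : Fin n => eval (α i) (r j))
    (J : Ideal (MvPolynomial (Fin n) ℂ))
    (hJ : ∀ p : MvPolynomial (Fin n) ℂ, p ∈ J ↔ ∀ β ∈ S, eval β p = 0) :
    Nonempty (B ≃ₐ[ℂ] (MvPolynomial (Fin n) ℂ ⧸ J)) ∧
      Module.finrank ℂ B = S.ncard := by
  classical
  have hSfin : S.Finite := by rw [hS]; exact Set.finite_range _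
  haveI : Fintype S := hSfin.fintype
  -- The evaluation map into functions on S
  let Φ : MvPolynomial (Fin n) ℂ →ₐ[ℂ] (S → ℂ) :=
    Pi.algHom ℂ _ fun β : S => MvPolynomial.aeval (β : Fin n → ℂ)
  have hΦapp : ∀ (p : MvPolynomial (Fin n) ℂ) (β : S), Φ p β = eval (β : Fin n → ℂ) p := by
    intro p β; exact aeval_eq_eval' _ p
  -- Φ is surjective via interpolation
  have hΦsurj : Function.Surjective Φ := by
    intro f
    refine ⟨∑ β : S, C (f β) * ∏ γ : S, sep (β : Fin n → ℂ) (γ : Fin n → ℂ), ?_⟩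
    funext δ
    rw [hΦapp]
    rw [map_sum]
    rw [Finset.sum_eq_single δ]
    · rw [map_mul, eval_C, map_prod]
      rw [Finset.prod_eq_one (fun γ _ => eval_sep_left _ _), mul_one]
    · intro β _ hβδ
      rw [map_mul, map_prod]
      rw [Finset.prod_eq_zero (Finset.mem_univ δ)
        (eval_sep_right _ _ (fun h => hβδ (Subtype.ext h)))]
      rw [mul_zero]
    · intro h; exact absurd (Finset.mem_univ δ) h
  -- J is the kernel of Φ
  have hJker : J = RingHom.ker Φ := by
    ext p
    rw [hJ, RingHom.mem_ker]
    constructor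
    · intro h; funext β; rw [hΦapp]; exact h β β.2; 
    · intro h β hβ
      have := congrFun h ⟨β, hβ⟩
      rwa [hΦapp] at this
  have e1 : (MvPolynomial (Fin n) ℂ ⧸ J) ≃ₐ[ℂ] (S → ℂ) :=
    (Ideal.quotientEquivAlgOfEq ℂ hJker).trans
      (Ideal.quotientKerAlgEquivOfSurjective hΦsurj)
  -- The map onto B
  let φ : MvPolynomial (Fin n) ℂ →ₐ[ℂ] (MvPolynomial (Fin n) ℂ ⧸ I) :=
    MvPolynomial.aeval fun j => Ideal.Quotient.mkₐ ℂ I (r j)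
  have hrange : φ.range = B := by
    rw [hB, Algebra.adjoin_range_eq_range_aeval]
    rfl
  have hkerφ : RingHom.ker φ = J := by
    ext p
    rw [RingHom.mem_ker, hJ]
    have hφp : φ p = Ideal.Quotient.mkₐ ℂ I (MvPolynomial.aeval r p) := by
      rw [comp_aeval_apply]
    rw [hφp, Ideal.Quotient.mkₐ_eq_mk, Ideal.Quotient.eq_zero_iff_mem, hI]
    have key : ∀ i : Fin k, eval (α i) (MvPolynomial.aeval r p)
        = eval (fun j => eval (α i) (r j)) p := by
      intro i
      rw [← aeval_eq_eval' (α i), comp_aeval_apply]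
      rw [aeval_eq_eval']
      simp only [aeval_eq_eval']
    constructor
    · intro h β hβ
      rw [hS] at hβ
      obtain ⟨i, rfl⟩ := hβ
      rw [← key]; exact h i
    · intro h i
      rw [key]
      exact h _ (by rw [hS]; exact ⟨i, rfl⟩)
  have e2 : (MvPolynomial (Fin n) ℂ ⧸ J) ≃ₐ[ℂ] B :=
    ((Ideal.quotientEquivAlgOfEq ℂ hkerφ.symm).trans
      (Ideal.quotientKerEquivRange φ)).trans (Subalgebra.equivOfEq _ _ hrange)
  refine ⟨⟨e2.symm⟩, ?_⟩
  rw [e2.symm.toLinearEquiv.finrank_eq, e1.toLinearEquiv.finrank_eq]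
  rw [Module.finrank_pi]
  rw [← Nat.card_coe_set_eq, Nat.card_eq_fintype_card]
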